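/- The Perron supremum is subharmonic: with S_g and u(x) = sup_{φ∈S_g} φ(x) as above, u satisfies u(v) ≤ (1/deg v)·Σ_{w∼v} u(w) for every v ∈ D. -/
import Mathlib


open Finset
open scoped Classical

/-- Normalized discrete Laplacian `Δu(v) = (1/deg v) Σ_{w∼v} (u(w) − u(v))`. -/
noncomputable def lap {V : Type*} [Fintype V] (G : SimpleGraph V) (u : V → ℝ) (v : V) : ℝ :=
  (1 / (G.degree v : ℝ)) * ∑ w ∈ G.neighborFinset v, (u w - u v)

/-- Boundary of `D`: vertices outside `D` adjacent to some vertex of `D`. -/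
noncomputable def bdry {V : Type*} [Fintype V] (G : SimpleGraph V) (D : Finset V) : Finset V :=
  Finset.univ.filter fun w => w ∉ D ∧ ∃ v ∈ D, G.Adj w v

/-- The Perron family `S_g`: functions subharmonic in `D` and `≤ g` on `∂D`. -/
def perronFam {V : Type*} [Fintype V] (G : SimpleGraph V) (D : Finset V) (g : V → ℝ) :
    Set (V → ℝ) :=
  {φ | (∀ v ∈ D, φ v ≤ (1 / (G.degree v : ℝ)) * ∑ w ∈ G.neighborFinset v, φ w) ∧
    ∀ w ∈ bdry G D, φ w ≤ g w}

/-- The Perron function `u(x) = sup_{φ ∈ S_g} φ(x)`. -/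
noncomputable def perronFn {V : Type*} [Fintype V] (G : SimpleGraph V) (D : Finset V)
    (g : V → ℝ) (x : V) : ℝ :=
  sSup ((fun φ : V → ℝ => φ x) '' perronFam G D g)

lemma mem_bdry {V : Type*} [Fintype V] {G : SimpleGraph V} {D : Finset V} {w : V} :
    w ∈ bdry G D ↔ w ∉ D ∧ ∃ v ∈ D, G.Adj w v := by
  simp [bdry]

lemma max_principle {V : Type*} [Fintype V] [DecidableEq V]
    {G : SimpleGraph V} (hconn : G.Connected)
    {D : Finset V} (hD : (bdry G D).Nonempty) {g : V → ℝ}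
    {φ : V → ℝ} (hφ : φ ∈ perronFam G D g) :
    ∀ x ∈ D ∪ bdry G D, φ x ≤ (bdry G D).sup' hD g := by
  obtain ⟨hsub, hbd⟩ := hφ
  set A := D ∪ bdry G D with hAdef
  have hA : A.Nonempty := hD.imp (fun w hw => mem_union_right _ hw)
  set m := A.sup' hA φ with hm
  -- it suffices that the max is attained on the boundary
  suffices h : ∃ w ∈ bdry G D, φ w = m by
    obtain ⟨w, hw, hwm⟩ := h
    intro x hx
    calc φ x ≤ m := le_sup' φ hx
    _ = φ w := hwm.symm
    _ ≤ g w := hbd w hw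
    _ ≤ (bdry G D).sup' hD g := le_sup' g hw
  by_contra hcon
  push_neg at hcon
  set T : Finset V := A.filter (fun x => φ x = m) with hT
  have hTD : T ⊆ D := by
    intro x hx
    rw [hT, mem_filter] at hx
    obtain ⟨hxA, hxm⟩ := hx
    rcases mem_union.mp hxA with h | h
    · exact h
    · exact absurd hxm (hcon x h)
  -- T is closed under adjacency
  have hclosed : ∀ x ∈ T, ∀ y, G.Adj x y → y ∈ T := by
    intro x hx y hxy
    have hxD : x ∈ D := hTD hx
    have hxm : φ x = m := (mem_filter.mp hx).2
    have hyA : y ∈ A := by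
      by_cases hyD : y ∈ D
      · exact mem_union_left _ hyD
      · exact mem_union_right _ (mem_bdry.mpr ⟨hyD, x, hxD, hxy.symm⟩)
    have hyle : φ y ≤ m := le_sup' φ hyA
    have hNle : ∀ w ∈ G.neighborFinset x, φ w ≤ m := by
      intro w hw
      rw [SimpleGraph.mem_neighborFinset] at hw
      have hwA : w ∈ A := by
        by_cases hwD : w ∈ D
        · exact mem_union_left _ hwD
        · exact mem_union_right _ (mem_bdry.mpr ⟨hwD, x, hxD, hw.symm⟩)
      exact le_sup' φ hwA
    have hdpos : 0 < (G.degree x : ℝ) := by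
      have : 0 < G.degree x := G.degree_pos_iff_exists_adj x |>.mpr ⟨y, hxy⟩
      exact_mod_cast this
    rw [hT, mem_filter]
    refine ⟨hyA, ?_⟩
    by_contra hne
    have hylt : φ y < m := lt_of_le_of_ne hyle hne
    have hsum : ∑ w ∈ G.neighborFinset x, φ w < ∑ w ∈ G.neighborFinset x, m := by
      apply Finset.sum_lt_sum hNle
      exact ⟨y, (SimpleGraph.mem_neighborFinset _ _ _).mpr hxy, hylt⟩
    rw [Finset.sum_const, SimpleGraph.card_neighborFinset_eq_degree, nsmul_eq_mul] at hsum
    have : φ x < m := by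
      calc φ x ≤ (1 / (G.degree x : ℝ)) * ∑ w ∈ G.neighborFinset x, φ w := hsub x hxD
      _ < (1 / (G.degree x : ℝ)) * ((G.degree x : ℝ) * m) := by
          apply mul_lt_mul_of_pos_left hsum
          positivity
      _ = m := by field_simp
    exact absurd hxm (ne_of_lt this)
  -- T propagates along walks
  have hwalk : ∀ a b : V, G.Walk a b → a ∈ T → b ∈ T := by
    intro a b p
    induction p with
    | nil => exact id
    | cons h p ih => intro ha; exact ih (hclosed _ ha _ h)
  -- some vertex attains the max
  obtain ⟨x₀, hx₀A, hx₀m⟩ := Finset.exists_mem_eq_sup' hA φ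
  have hx₀T : x₀ ∈ T := mem_filter.mpr ⟨hx₀A, hx₀m.symm⟩
  obtain ⟨w₀, hw₀⟩ := hD
  have : w₀ ∈ T := hwalk x₀ w₀ (hconn x₀ w₀).some hx₀T
  exact (mem_bdry.mp hw₀).1 (hTD this)


/-- The Perron supremum is subharmonic in `D`. -/
theorem perron_subharmonic {V : Type*} [Fintype V] [DecidableEq V]
    (G : SimpleGraph V) (hconn : G.Connected)
    (D : Finset V) (hD : (bdry G D).Nonempty) (g : V → ℝ) :
    ∀ v ∈ D, perronFn G D g v ≤
      (1 / (G.degree v : ℝ)) * ∑ w ∈ G.neighborFinset v, perronFn G D g w := by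
  intro v hv
  by_cases hS : (perronFam G D g).Nonempty
  · have hbddw : ∀ w ∈ G.neighborFinset v,
        BddAbove ((fun φ : V → ℝ => φ w) '' perronFam G D g) := by
      intro w hw
      rw [SimpleGraph.mem_neighborFinset] at hw
      have hwA : w ∈ D ∪ bdry G D := by
        by_cases hwD : w ∈ D
        · exact mem_union_left _ hwD
        · exact mem_union_right _ (mem_bdry.mpr ⟨hwD, v, hv, hw.symm⟩)
      exact ⟨(bdry G D).sup' hD g, by
        rintro y ⟨φ, hφ, rfl⟩
        exact max_principle hconn hD hφ w hwA⟩
    apply csSup_le (hS.image _)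
    rintro y ⟨φ, hφ, rfl⟩
    calc φ v ≤ (1 / (G.degree v : ℝ)) * ∑ w ∈ G.neighborFinset v, φ w := hφ.1 v hv
    _ ≤ (1 / (G.degree v : ℝ)) * ∑ w ∈ G.neighborFinset v, perronFn G D g w := by
        apply mul_le_mul_of_nonneg_left _ (by positivity)
        apply Finset.sum_le_sum
        intro w hw
        exact le_csSup (hbddw w hw) ⟨φ, hφ, rfl⟩
  · rw [Set.not_nonempty_iff_eq_empty] at hS
    have hz : ∀ x, perronFn G D g x = 0 := by
      intro x; rw [perronFn, hS, Set.image_empty, Real.sSup_empty]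
    rw [hz v]
    simp only [hz]
    simp
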